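/- Let p ∈ (1,∞). Then there is a constant c_p ≥ 0 such that the following holds: whenever X is a Banach space, (T(s))_{s≥0} is a C₀-semigroup on X, 0 < a < b < ∞, M(b) := sup_{0≤s≤b} ‖T(s)‖, μ is a finite complex Borel measure on [0,∞) with support contained in [a,b], and C ≥ 0 is an L^p(ℝ;X)-convolution bound for μ, then ‖∫_{[a,b]} T(s)x μ(ds)‖ ≤ c_p (1 + log(b/a)) M(b)² C ‖x‖ for all x ∈ X. -/

import Mathlib

/-!
Cover `[a, b]` by `n ≤ 2 (1 + log (b / a))` dyadic bumps `W_k = R_{v_k} - R_{2 v_k}`,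
`v_k = 2^k a / 2`, where `R_v` is the piecewise linear ramp rising from `0` at `v` to `1` at
`2 v`. Each bump is a convolution `W_k = φ_k ∗ ψ_k` of a step function `φ_k` supported in
`[v_k, 3 v_k)` with the box kernel `ψ_k = v_k⁻¹ 1_{(0, v_k]}`. Fubini and the semigroup law turn
`∫ W_k(s) T(s) x dμ(s)` into `∫ φ_k(t) T(t) (μ ∗ G_k)(t) dt` with `G_k(r) = v_k⁻¹ T(-r) x` on
`[-v_k, 0)`, and Hölder's inequality with the convolution bound gives
`M ‖φ_k‖_q C ‖G_k‖_p ≤ 2 M² C ‖x‖`, uniformly in the scale.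
-/

open MeasureTheory Set
open scoped ENNReal

noncomputable section

lemma eLpNorm_le_of_norm_le_indicator_Ico {E : Type*} [NormedAddCommGroup E] {G : ℝ → E}
    {c d K p : ℝ} (hcd : c ≤ d) (hK : 0 ≤ K) (hp : 0 ≤ p)
    (hG : ∀ t, ‖G t‖ ≤ (Ico c d).indicator (fun _ => K) t) :
    eLpNorm G (ENNReal.ofReal p) volume ≤ ENNReal.ofReal (K * (d - c) ^ p⁻¹) := by
  refine (eLpNorm_mono_real hG).trans ((eLpNorm_indicator_const_le _ _).trans_eq ?_)
  rw [Real.volume_Ico, ENNReal.toReal_ofReal hp, one_div,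
    ENNReal.ofReal_rpow_of_nonneg (by linarith) (by positivity), Real.enorm_eq_ofReal hK,
    ← ENNReal.ofReal_mul hK]

lemma enorm_integral_le_mul_eLpNorm_mul_eLpNorm {α E F : Type*} [MeasurableSpace α]
    {μ : Measure α} [NormedAddCommGroup E] [NormedSpace ℝ E] [NormedAddCommGroup F]
    [NormedSpace ℝ F] {p q : ℝ≥0∞} [p.HolderConjugate q] {G : α → E} {φ : α → ℝ} {g : α → F}
    {c : ℝ} (hφ : AEStronglyMeasurable φ μ) (hg : AEStronglyMeasurable g μ)
    (hG : ∀ᵐ t ∂μ, ‖G t‖ ≤ c * ‖φ t • g t‖) :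
    ‖∫ t, G t ∂μ‖ₑ ≤ ENNReal.ofReal c * (eLpNorm φ p μ * eLpNorm g q μ) :=
  calc ‖∫ t, G t ∂μ‖ₑ ≤ ∫⁻ t, ‖G t‖ₑ ∂μ := enorm_integral_le_lintegral_enorm G
    _ ≤ ∫⁻ t, ENNReal.ofReal c * ‖(φ • g) t‖ₑ ∂μ := by
      refine lintegral_mono_ae (hG.mono fun t ht => ?_)
      rw [← ofReal_norm, ← ofReal_norm, ← ENNReal.ofReal_mul' (norm_nonneg _)]
      exact ENNReal.ofReal_le_ofReal ht
    _ = ENNReal.ofReal c * eLpNorm (φ • g) 1 μ := by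
      rw [lintegral_const_mul'' _ (hφ.smul hg).enorm, eLpNorm_one_eq_lintegral_enorm]
    _ ≤ ENNReal.ofReal c * (eLpNorm φ p μ * eLpNorm g q μ) := by
      gcongr; exact eLpNorm_smul_le_mul_eLpNorm hg hφ

def boxKernel (v : ℝ) : ℝ → ℝ := (Ioc 0 v).indicator fun _ => v⁻¹

def ramp (v w s : ℝ) : ℝ := v⁻¹ * max (min (s - w) v) 0

def dyadicStep (v t : ℝ) : ℝ :=
  (Ici v).indicator 1 t - ((Ici (2 * v)).indicator 1 t + (Ici (3 * v)).indicator 1 t) / 2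

def dyadicBump (v s : ℝ) : ℝ := ramp v v s - ramp (2 * v) (2 * v) s

lemma measurable_boxKernel (v : ℝ) : Measurable (boxKernel v) :=
  measurable_const.indicator measurableSet_Ioc

lemma norm_boxKernel_le {v : ℝ} (hv : 0 ≤ v) (r : ℝ) : ‖boxKernel v r‖ ≤ v⁻¹ := by
  rw [Real.norm_eq_abs, abs_le]
  unfold boxKernel indicator
  split_ifs <;> constructor <;> linarith [inv_nonneg.2 hv]

section Ramp

variable {v w s : ℝ}

lemma ramp_nonneg (hv : 0 ≤ v) : 0 ≤ ramp v w s :=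
  mul_nonneg (inv_nonneg.2 hv) (le_max_right _ _)

lemma ramp_le_one (hv : 0 < v) : ramp v w s ≤ 1 := by
  rw [ramp, inv_mul_le_one₀ hv]
  exact max_le (min_le_right _ _) hv.le

lemma ramp_of_le (hs : s ≤ w) : ramp v w s = 0 := by
  rw [ramp, max_eq_right (min_le_of_left_le (by linarith)), mul_zero]

lemma ramp_of_add_le (hv : 0 < v) (hs : w + v ≤ s) : ramp v w s = 1 := by
  rw [ramp, min_eq_right (by linarith), max_eq_left hv.le, inv_mul_cancel₀ hv.ne']

lemma continuous_ramp (v w : ℝ) : Continuous (ramp v w) := by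
  unfold ramp; fun_prop

/-- This is what makes `dyadicBump v` a convolution with `boxKernel v`. -/
lemma ramp_two_mul (v s : ℝ) :
    ramp (2 * v) (2 * v) s = (ramp v (2 * v) s + ramp v (3 * v) s) / 2 := by
  simp only [ramp, mul_inv, ← mul_add]
  rcases le_or_gt v 0 with hv | hv
  · simp only [max_eq_right (min_le_of_right_le (by linarith : 2 * v ≤ 0)),
      max_eq_right (min_le_of_right_le hv)]; ring
  · have : max (min (s - 2 * v) (2 * v)) 0
        = max (min (s - 2 * v) v) 0 + max (min (s - 3 * v) v) 0 := by
      simp only [max_def, min_def]; split_ifs <;> linarith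
    rw [this]; ring

end Ramp

lemma indicator_Ici_mul_boxKernel (v w s : ℝ) :
    (fun t => (Ici w).indicator 1 t * boxKernel v (s - t))
      = (Ico (max w (s - v)) s).indicator fun _ => v⁻¹ := by
  ext t
  simp only [boxKernel, indicator_apply, mem_Ici, mem_Ioc, mem_Ico, max_le_iff, Pi.one_apply]
  split_ifs <;> first | exact one_mul _ | exact zero_mul _ | exact mul_zero _ | (exfalso; grind)

lemma integrable_indicator_Ici_mul_boxKernel (v w s : ℝ) :
    Integrable fun t => (Ici w).indicator 1 t * boxKernel v (s - t) := by
  rw [indicator_Ici_mul_boxKernel]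
  exact (integrable_indicator_iff measurableSet_Ico).2 (integrableOn_const measure_Ico_lt_top.ne)

lemma integral_indicator_Ici_mul_boxKernel (v w s : ℝ) :
    ∫ t, (Ici w).indicator 1 t * boxKernel v (s - t) = ramp v w s := by
  rw [indicator_Ici_mul_boxKernel, integral_indicator_const _ measurableSet_Ico,
    Real.volume_real_Ico, smul_eq_mul, ramp, mul_comm, ← min_sub_sub_left, sub_sub_cancel]

section Dyadic

variable {v s : ℝ}

lemma measurable_dyadicStep (v : ℝ) : Measurable (dyadicStep v) := by
  unfold dyadicStep; measurability

lemma norm_dyadicStep_le (hv : 0 ≤ v) (t : ℝ) :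
    ‖dyadicStep v t‖ ≤ (Ico v (3 * v)).indicator 1 t := by
  simp only [Real.norm_eq_abs, dyadicStep, indicator_apply, mem_Ici, mem_Ico, Pi.one_apply]
  split_ifs <;> first | (exfalso; grind) | norm_num

lemma dyadicStep_of_neg {t : ℝ} (hv : 0 ≤ v) (ht : t < 0) : dyadicStep v t = 0 :=
  norm_le_zero_iff.1 <| (norm_dyadicStep_le hv t).trans_eq <|
    indicator_of_notMem (fun hmem => by linarith [hmem.1]) _

lemma integrable_dyadicStep (hv : 0 ≤ v) : Integrable (dyadicStep v) :=
  ((integrable_indicator_iff measurableSet_Ico).2 (integrableOn_const measure_Ico_lt_top.ne)).mono'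
    (measurable_dyadicStep v).aestronglyMeasurable (.of_forall (norm_dyadicStep_le hv))

lemma eLpNorm_dyadicStep_le (hv : 0 ≤ v) {q : ℝ} (hq : 0 ≤ q) :
    eLpNorm (dyadicStep v) (ENNReal.ofReal q) volume ≤ ENNReal.ofReal ((2 * v) ^ q⁻¹) := by
  have := eLpNorm_le_of_norm_le_indicator_Ico (by linarith) zero_le_one hq (norm_dyadicStep_le hv)
  rwa [one_mul, show 3 * v - v = 2 * v by ring] at this

lemma integral_dyadicStep_mul_boxKernel (v s : ℝ) :
    ∫ t, dyadicStep v t * boxKernel v (s - t) = dyadicBump v s := by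
  have hI := fun w => integrable_indicator_Ici_mul_boxKernel v w s
  simp only [dyadicStep, sub_mul, div_mul_eq_mul_div, add_mul]
  have hJ : Integrable fun t => ((Ici (2 * v)).indicator 1 t * boxKernel v (s - t)
      + (Ici (3 * v)).indicator 1 t * boxKernel v (s - t)) / 2 := ((hI _).add (hI _)).div_const 2
  rw [integral_sub (hI v) hJ, integral_div, integral_add (hI _) (hI _)]
  simp only [integral_indicator_Ici_mul_boxKernel, dyadicBump, ramp_two_mul]

lemma abs_dyadicBump_le_one (hv : 0 < v) : |dyadicBump v s| ≤ 1 := by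
  have h2v : 0 < 2 * v := by positivity
  rw [dyadicBump, abs_le]
  constructor <;> linarith [ramp_nonneg (w := v) (s := s) hv.le, ramp_le_one (w := v) (s := s) hv,
    ramp_nonneg (w := 2 * v) (s := s) h2v.le, ramp_le_one (w := 2 * v) (s := s) h2v]

lemma continuous_dyadicBump (v : ℝ) : Continuous (dyadicBump v) :=
  (continuous_ramp _ _).sub (continuous_ramp _ _)

lemma sum_dyadicBump_eq_one {w : ℝ} (hw : 0 < w) {n : ℕ} (hs : s ∈ Icc (2 * w) (2 ^ n * w)) :
    ∑ k ∈ Finset.range n, dyadicBump (2 ^ k * w) s = 1 := by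
  have hstep : ∀ k : ℕ, 2 * (2 ^ k * w) = 2 ^ (k + 1) * w := fun k => by ring
  simp only [dyadicBump, hstep, Finset.sum_range_sub' (fun k => ramp (2 ^ k * w) (2 ^ k * w) s)]
  rw [pow_zero, one_mul, ramp_of_add_le hw (by linarith [hs.1]), ramp_of_le hs.2, sub_zero]

end Dyadic

lemma integral_eq_sum_integral_dyadicBump_smul {E : Type*} [NormedAddCommGroup E]
    [NormedSpace ℝ E] {ν : Measure ℝ} {g : ℝ → E} (hg : Integrable g ν) {w : ℝ} (hw : 0 < w)
    {n : ℕ} (hν : ∀ᵐ s ∂ν, s ∈ Icc (2 * w) (2 ^ n * w)) :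
    ∫ s, g s ∂ν = ∑ k ∈ Finset.range n, ∫ s, dyadicBump (2 ^ k * w) s • g s ∂ν := by
  rw [← integral_finsetSum]
  · refine integral_congr_ae ?_
    filter_upwards [hν] with s hs
    rw [← Finset.sum_smul, sum_dyadicBump_eq_one hw hs, one_smul]
  · exact fun k _ => hg.smul_of_top_right <| memLp_top_of_bound
      (continuous_dyadicBump _).aestronglyMeasurable 1
      (.of_forall fun _ => abs_dyadicBump_le_one (by positivity))

lemma natCast_le_two_mul_log {x : ℝ} {m : ℕ} (hm : (2 : ℝ) ^ m ≤ x) :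
    (m : ℝ) ≤ 2 * Real.log x := by
  have h := Real.log_le_log (by positivity) hm
  rw [Real.log_pow] at h
  nlinarith [Real.log_two_gt_d9, m.cast_nonneg (α := ℝ)]

section Transference

variable {X : Type*} [NormedAddCommGroup X] [NormedSpace ℂ X]
  {T : ℝ → X →L[ℂ] X} {f : ℝ → X} {ν : Measure ℝ} {h : ℝ → ℂ} {b v K : ℝ}

def measureConv (ν : Measure ℝ) (h : ℝ → ℂ) (F : ℝ → X) (t : ℝ) : X := ∫ s, h s • F (t - s) ∂ν

def reflectBox (f : ℝ → X) (v : ℝ) : ℝ → X := (Ico (-v) 0).indicator fun r => v⁻¹ • f (-r)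

lemma stronglyMeasurable_reflectBox (hf : Continuous f) (v : ℝ) :
    StronglyMeasurable (reflectBox f v) :=
  ((hf.comp continuous_neg).const_smul v⁻¹).stronglyMeasurable.indicator measurableSet_Ico

lemma norm_reflectBox_le (hv : 0 < v) (hvb : v ≤ b) (hfK : ∀ s ∈ Icc 0 b, ‖f s‖ ≤ K) (r : ℝ) :
    ‖reflectBox f v r‖ ≤ (Ico (-v) 0).indicator (fun _ => v⁻¹ * K) r := by
  by_cases hr : r ∈ Ico (-v) 0
  · rw [reflectBox, indicator_of_mem hr, indicator_of_mem hr, norm_smul, norm_inv,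
      Real.norm_of_nonneg hv.le]
    exact mul_le_mul_of_nonneg_left (hfK _ ⟨by linarith [hr.2], by linarith [hr.1]⟩)
      (inv_nonneg.2 hv.le)
  · simp [reflectBox, indicator_of_notMem hr]

lemma norm_reflectBox_le_const (hv : 0 < v) (hvb : v ≤ b) (hfK : ∀ s ∈ Icc 0 b, ‖f s‖ ≤ K)
    (r : ℝ) : ‖reflectBox f v r‖ ≤ v⁻¹ * K := by
  have hK : 0 ≤ K := (norm_nonneg _).trans (hfK 0 ⟨le_rfl, hv.le.trans hvb⟩)
  refine (norm_reflectBox_le hv hvb hfK r).trans ?_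
  by_cases hr : r ∈ Ico (-v) 0
  · rw [indicator_of_mem hr]
  · rw [indicator_of_notMem hr]; positivity

lemma eLpNorm_reflectBox_le {p : ℝ} (hp : 0 ≤ p) (hv : 0 < v) (hvb : v ≤ b)
    (hfK : ∀ s ∈ Icc 0 b, ‖f s‖ ≤ K) :
    eLpNorm (reflectBox f v) (ENNReal.ofReal p) volume ≤ ENNReal.ofReal (v⁻¹ * K * v ^ p⁻¹) := by
  have hK : 0 ≤ K := (norm_nonneg _).trans (hfK 0 ⟨le_rfl, hv.le.trans hvb⟩)
  have := eLpNorm_le_of_norm_le_indicator_Ico (by linarith) (by positivity) hp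
    (norm_reflectBox_le hv hvb hfK)
  rwa [zero_sub, neg_neg] at this

lemma measureConv_reflectBox_eq_zero_of_le (hν : ∀ᵐ s ∂ν, s ≤ b) {t : ℝ} (ht : b ≤ t) :
    measureConv ν h (reflectBox f v) t = 0 := by
  refine integral_eq_zero_of_ae ?_
  filter_upwards [hν] with s hs
  rw [reflectBox, indicator_of_notMem (fun hmem => by linarith [hmem.2]), smul_zero]
  rfl

lemma integrable_smul_reflectBox (hv : 0 < v) (hvb : v ≤ b) (hf : Continuous f)
    (hfK : ∀ s ∈ Icc 0 b, ‖f s‖ ≤ K) (hh : Integrable h ν) (t : ℝ) :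
    Integrable (fun s => h s • reflectBox f v (t - s)) ν :=
  hh.smul_of_top_left <| memLp_top_of_bound
    ((stronglyMeasurable_reflectBox hf v).comp_measurable
      (measurable_const.sub measurable_id)).aestronglyMeasurable
    _ (.of_forall fun s => norm_reflectBox_le_const hv hvb hfK (t - s))

lemma aestronglyMeasurable_measureConv [SFinite ν] {F : ℝ → X} (hF : StronglyMeasurable F)
    (hh : AEStronglyMeasurable h ν) : AEStronglyMeasurable (measureConv ν h F) volume :=
  AEStronglyMeasurable.integral_prod_right' (f := fun z : ℝ × ℝ => h z.2 • F (z.1 - z.2))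
    ((hh.comp_quasiMeasurePreserving Measure.quasiMeasurePreserving_snd).smul
      (hF.comp_measurable (measurable_fst.sub measurable_snd)).aestronglyMeasurable)

lemma boxKernel_smul_eq_apply_reflectBox {φ : ℝ → ℝ} (hφ : ∀ t < 0, φ t = 0)
    (hfT : ∀ t ≥ 0, ∀ r ∈ Ioc 0 v, f (t + r) = T t (f r)) (c : ℂ) (s t : ℝ) :
    (φ t * boxKernel v (s - t)) • c • f s = φ t • T t (c • reflectBox f v (t - s)) := by
  by_cases hst : s - t ∈ Ioc 0 v
  · rcases lt_or_ge t 0 with ht | ht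
    · simp [hφ t ht]
    have hmem : t - s ∈ Ico (-v) 0 := ⟨by linarith [hst.2], by linarith [hst.1]⟩
    have hfs : f s = T t (f (s - t)) := by rw [← hfT t ht _ hst, add_sub_cancel]
    rw [boxKernel, reflectBox, indicator_of_mem hst, indicator_of_mem hmem, neg_sub, hfs,
      map_smul, ContinuousLinearMap.map_smul_of_tower, mul_smul, smul_comm c]
  · have hmem : t - s ∉ Ico (-v) 0 := fun hmem => hst ⟨by linarith [hmem.2], by linarith [hmem.1]⟩
    simp [boxKernel, reflectBox, indicator_of_notMem hst, indicator_of_notMem hmem]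

lemma integrable_uncurry_boxKernel_smul [SFinite ν] (hv : 0 ≤ v) (hf : Continuous f)
    (hfK : ∀ s ∈ Icc 0 b, ‖f s‖ ≤ K) (hν : ∀ᵐ s ∂ν, s ∈ Icc 0 b) (hh : Integrable h ν)
    {φ : ℝ → ℝ} (hφ : Integrable φ) :
    Integrable (Function.uncurry fun s t => (φ t * boxKernel v (s - t)) • h s • f s)
      (ν.prod volume) := by
  refine Integrable.mono' ((hh.norm.mul_const K).mul_prod (hφ.norm.mul_const v⁻¹)) ?_ ?_
  · exact ((hφ.aestronglyMeasurable.comp_quasiMeasurePreserving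
        Measure.quasiMeasurePreserving_snd).mul
      ((measurable_boxKernel v).comp (measurable_fst.sub measurable_snd)).aestronglyMeasurable).smul
      ((hh.aestronglyMeasurable.comp_quasiMeasurePreserving
        Measure.quasiMeasurePreserving_fst).smul (hf.comp continuous_fst).aestronglyMeasurable)
  · filter_upwards [Measure.quasiMeasurePreserving_fst.ae hν] with ⟨s, t⟩ hs
    simp only [Function.uncurry_apply_pair, norm_smul, norm_mul]
    calc ‖φ t‖ * ‖boxKernel v (s - t)‖ * (‖h s‖ * ‖f s‖) ≤ ‖φ t‖ * v⁻¹ * (‖h s‖ * K) := by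
          gcongr
          exacts [norm_boxKernel_le hv _, hfK s hs]
      _ = ‖h s‖ * K * (‖φ t‖ * v⁻¹) := by ring

lemma integral_boxKernel_conv_smul_eq [CompleteSpace X] [SFinite ν] (hv : 0 < v) (hvb : v ≤ b)
    (hf : Continuous f) (hfT : ∀ t ≥ 0, ∀ r ∈ Ioc 0 v, f (t + r) = T t (f r))
    (hfK : ∀ s ∈ Icc 0 b, ‖f s‖ ≤ K) (hν : ∀ᵐ s ∂ν, s ∈ Icc 0 b) (hh : Integrable h ν)
    {φ : ℝ → ℝ} (hφ : Integrable φ) (hφ0 : ∀ t < 0, φ t = 0) :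
    ∫ s, (∫ t, φ t * boxKernel v (s - t)) • h s • f s ∂ν
      = ∫ t, φ t • T t (measureConv ν h (reflectBox f v) t) :=
  calc ∫ s, (∫ t, φ t * boxKernel v (s - t)) • h s • f s ∂ν
      = ∫ s, ∫ t, (φ t * boxKernel v (s - t)) • h s • f s ∂volume ∂ν := by
        simp_rw [integral_smul_const]
    _ = ∫ t, ∫ s, (φ t * boxKernel v (s - t)) • h s • f s ∂ν :=
        integral_integral_swap (integrable_uncurry_boxKernel_smul hv.le hf hfK hν hh hφ)
    _ = ∫ t, φ t • T t (measureConv ν h (reflectBox f v) t) := by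
        congr 1; ext t
        simp_rw [boxKernel_smul_eq_apply_reflectBox hφ0 hfT, integral_smul,
          (T t).integral_comp_comm (integrable_smul_reflectBox hv hvb hf hfK hh t)]
        rfl

lemma norm_dyadicStep_smul_apply_le {M : ℝ} (hv : 0 ≤ v) (hM : ∀ t ∈ Icc 0 b, ‖T t‖ ≤ M)
    (hν : ∀ᵐ s ∂ν, s ≤ b) (t : ℝ) :
    ‖dyadicStep v t • T t (measureConv ν h (reflectBox f v) t)‖
      ≤ M * ‖dyadicStep v t • measureConv ν h (reflectBox f v) t‖ := by
  rcases lt_or_ge t 0 with ht0 | ht0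
  · simp [dyadicStep_of_neg hv ht0]
  rcases le_or_gt b t with htb | htb
  · simp [measureConv_reflectBox_eq_zero_of_le hν htb]
  rw [norm_smul, norm_smul, mul_left_comm]
  gcongr
  exact (T t).le_of_opNorm_le (hM t ⟨ht0, htb.le⟩) _

variable [CompleteSpace X] [SFinite ν] {p C M : ℝ}

theorem norm_integral_dyadicBump_smul_le (hp : 1 < p) (hC : 0 ≤ C)
    (hconv : ∀ F : ℝ → X, MemLp F (ENNReal.ofReal p) volume →
      eLpNorm (measureConv ν h F) (ENNReal.ofReal p) volume
        ≤ ENNReal.ofReal C * eLpNorm F (ENNReal.ofReal p) volume)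
    (hv : 0 < v) (hvb : v ≤ b) (hf : Continuous f)
    (hfT : ∀ t ≥ 0, ∀ r ∈ Ioc 0 v, f (t + r) = T t (f r))
    (hfK : ∀ s ∈ Icc 0 b, ‖f s‖ ≤ K) (hM : ∀ t ∈ Icc 0 b, ‖T t‖ ≤ M)
    (hν : ∀ᵐ s ∂ν, s ∈ Icc 0 b) (hh : Integrable h ν) :
    ‖∫ s, dyadicBump v s • h s • f s ∂ν‖ ≤ 2 * M * C * K := by
  set q := p.conjExponent
  have hpq : p.HolderConjugate q := .conjExponent hp
  have := hpq.symm.ennrealOfReal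
  have hM0 : 0 ≤ M := (norm_nonneg _).trans (hM 0 ⟨le_rfl, hv.le.trans hvb⟩)
  have hMCK : 0 ≤ M * C * K :=
    mul_nonneg (mul_nonneg hM0 hC) ((norm_nonneg _).trans (hfK 0 ⟨le_rfl, hv.le.trans hvb⟩))
  have hG := eLpNorm_reflectBox_le hpq.nonneg hv hvb hfK
  have hV := hconv _ ⟨(stronglyMeasurable_reflectBox hf v).aestronglyMeasurable,
    hG.trans_lt ENNReal.ofReal_lt_top⟩
  have hvv : (2 * v) ^ q⁻¹ * v ^ p⁻¹ = 2 ^ q⁻¹ * v := by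
    rw [Real.mul_rpow zero_le_two hv.le, mul_assoc, ← Real.rpow_add hv, add_comm,
      hpq.inv_add_inv_eq_one, Real.rpow_one]
  have harith : M * ((2 * v) ^ q⁻¹ * (C * (v⁻¹ * K * v ^ p⁻¹))) ≤ 2 * M * C * K :=
    calc _ = M * C * K * v⁻¹ * ((2 * v) ^ q⁻¹ * v ^ p⁻¹) := by ring
      _ = 2 ^ q⁻¹ * (M * C * K) * (v * v⁻¹) := by rw [hvv]; ring
      _ ≤ 2 * M * C * K := by
        rw [mul_inv_cancel₀ hv.ne', mul_one, mul_assoc 2, mul_assoc 2]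
        exact mul_le_mul_of_nonneg_right (Real.rpow_le_self_of_one_le one_le_two
          (inv_le_one_of_one_le₀ hpq.symm.lt.le)) hMCK
  simp_rw [← integral_dyadicStep_mul_boxKernel]
  rw [integral_boxKernel_conv_smul_eq hv hvb hf hfT hfK hν hh (integrable_dyadicStep hv.le)
    (fun t => dyadicStep_of_neg hv.le), ← ENNReal.ofReal_le_ofReal_iff (by linarith),
    ofReal_norm]
  calc _ ≤ ENNReal.ofReal M * (eLpNorm (dyadicStep v) (ENNReal.ofReal q) volume
          * eLpNorm (measureConv ν h (reflectBox f v)) (ENNReal.ofReal p) volume) :=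
        enorm_integral_le_mul_eLpNorm_mul_eLpNorm (measurable_dyadicStep v).aestronglyMeasurable
          (aestronglyMeasurable_measureConv (stronglyMeasurable_reflectBox hf v)
            hh.aestronglyMeasurable)
          (.of_forall (norm_dyadicStep_smul_apply_le hv.le hM (hν.mono fun _ hs => hs.2)))
    _ ≤ ENNReal.ofReal M * (ENNReal.ofReal ((2 * v) ^ q⁻¹)
          * (ENNReal.ofReal C * ENNReal.ofReal (v⁻¹ * K * v ^ p⁻¹))) := by
        gcongr
        exacts [eLpNorm_dyadicStep_le hv.le hpq.symm.nonneg, hV.trans (by gcongr)]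
    _ ≤ ENNReal.ofReal (2 * M * C * K) := by
        rw [← ENNReal.ofReal_mul hC, ← ENNReal.ofReal_mul (by positivity),
          ← ENNReal.ofReal_mul hM0]
        exact ENNReal.ofReal_le_ofReal harith

theorem norm_integral_smul_le_of_dyadic_scales (hp : 1 < p) (hC : 0 ≤ C)
    (hconv : ∀ F : ℝ → X, MemLp F (ENNReal.ofReal p) volume →
      eLpNorm (measureConv ν h F) (ENNReal.ofReal p) volume
        ≤ ENNReal.ofReal C * eLpNorm F (ENNReal.ofReal p) volume) {a : ℝ} {m : ℕ}
    (ha : 0 < a) (hmb : 2 ^ m * a ≤ b) (hbm : b < 2 ^ (m + 1) * a) (hf : Continuous f)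
    (hfT : ∀ t ≥ 0, ∀ r > 0, f (t + r) = T t (f r)) (hfK : ∀ s ∈ Icc 0 b, ‖f s‖ ≤ K)
    (hM : ∀ t ∈ Icc 0 b, ‖T t‖ ≤ M) (hν : ∀ᵐ s ∂ν, s ∈ Icc a b) (hh : Integrable h ν) :
    ‖∫ s, h s • f s ∂ν‖ ≤ (m + 2) * (2 * M * C * K) := by
  have hν0 : ∀ᵐ s ∂ν, s ∈ Icc 0 b := hν.mono fun s hs => ⟨ha.le.trans hs.1, hs.2⟩
  have hhf : Integrable (fun s => h s • f s) ν :=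
    hh.smul_of_top_left (memLp_top_of_bound hf.aestronglyMeasurable _ (hν0.mono hfK))
  rw [integral_eq_sum_integral_dyadicBump_smul hhf (half_pos ha) (n := m + 2)
    (hν.mono fun s hs => ⟨by linarith [hs.1], by rw [pow_succ]; linarith [hs.2]⟩)]
  refine (norm_sum_le_of_le _ (n := fun _ => 2 * M * C * K) fun k hk => ?_).trans_eq (by simp)
  have hk : (2 : ℝ) ^ k ≤ 2 ^ (m + 1) :=
    pow_le_pow_right₀ one_le_two (Nat.lt_succ_iff.1 (Finset.mem_range.1 hk))
  exact norm_integral_dyadicBump_smul_le hp hC hconv (by positivity)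
    (by rw [pow_succ] at hk; nlinarith) hf (fun t ht r hr => hfT t ht r hr.1) hfK hM hν0 hh

end Transference

end

theorem transference_semigroup_continuous (p : ℝ) (hp : 1 < p) :
    ∃ c : ℝ, 0 ≤ c ∧
      ∀ (X : Type*) [NormedAddCommGroup X] [NormedSpace ℂ X] [CompleteSpace X],
      ∀ T : ℝ → X →L[ℂ] X,
        T 0 = 1 →
        (∀ s ≥ (0:ℝ), ∀ t ≥ (0:ℝ), T (s + t) = (T s).comp (T t)) →
        (∀ x : X, ContinuousOn (fun s => T s x) (Set.Ici 0)) →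
      ∀ a b : ℝ, 0 < a → a < b →
      ∀ M : ℝ, (∀ s ∈ Set.Icc (0:ℝ) b, ‖T s‖ ≤ M) →
      ∀ ν : Measure ℝ, IsFiniteMeasure ν → ν (Set.Icc a b)ᶜ = 0 →
      ∀ h : ℝ → ℂ, Integrable h ν →
      ∀ C : ℝ, 0 ≤ C →
        (∀ F : ℝ → X, MemLp F (ENNReal.ofReal p) volume →
          eLpNorm (fun t => ∫ s, h s • F (t - s) ∂ν) (ENNReal.ofReal p) volume
            ≤ ENNReal.ofReal C * eLpNorm F (ENNReal.ofReal p) volume) →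
      ∀ x : X,
        ‖∫ s, h s • T s x ∂ν‖ ≤ c * (1 + Real.log (b / a)) * M ^ 2 * C * ‖x‖ := by
  refine ⟨4, by norm_num, ?_⟩
  intro X _ _ _ T _ hsg hTcont a b ha hab M hM ν _ hνc h hh C hC hconv x
  have hν : ∀ᵐ s ∂ν, s ∈ Icc a b := (measure_eq_zero_iff_ae_notMem.1 hνc).mono fun _ => not_not.1
  obtain ⟨m, hm, hm'⟩ := exists_nat_pow_near ((one_le_div ha).2 hab.le) one_lt_two
  have hM0 : 0 ≤ M := (norm_nonneg _).trans (hM 0 ⟨le_rfl, ha.le.trans hab.le⟩)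
  have hlog := natCast_le_two_mul_log hm
  calc ‖∫ s, h s • T s x ∂ν‖ = ‖∫ s, h s • T (max s 0) x ∂ν‖ := by
        congr 1
        exact integral_congr_ae (hν.mono fun s hs => by simp [max_eq_left (ha.le.trans hs.1)])
    _ ≤ (m + 2) * (2 * M * C * (M * ‖x‖)) := by
        refine norm_integral_smul_le_of_dyadic_scales (T := T) hp hC hconv ha
          ((le_div_iff₀ ha).1 hm) ((div_lt_iff₀ ha).1 hm')
          ((hTcont x).comp_continuous (continuous_id.max continuous_const)
            fun s => le_max_right s 0)
          (fun t ht r hr => ?_) (fun s hs => ?_) hM hν hh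
        · simp [max_eq_left hr.le, max_eq_left (add_nonneg ht hr.le), hsg t ht r hr.le]
        · exact (T _).le_of_opNorm_le (hM _ ⟨le_max_right _ _, max_le hs.2 (hs.1.trans hs.2)⟩) x
    _ ≤ 2 * (1 + Real.log (b / a)) * (2 * M * C * (M * ‖x‖)) := by gcongr; linarith
    _ = 4 * (1 + Real.log (b / a)) * M ^ 2 * C * ‖x‖ := by ring
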